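/- The Paige loop M*(q) = M(q)/Z(M(q)), the quotient of the determinant-1 Zorn matrix loop over F_q by its center, has order q^3(q^4 − 1)/gcd(q − 1, 2). -/

import Mathlib

open Matrix

/-- A Zorn vector matrix `[[a, α], [β, b]]` over a field `F`. -/
structure ZornMatrix (F : Type*) [Field F] where
  a : F
  α : Fin 3 → F
  β : Fin 3 → F
  b : F

namespace ZornMatrix

variable {F : Type*} [Field F]

/-- Zorn's vector matrix multiplication. -/
def mul (M N : ZornMatrix F) : ZornMatrix F :=
  ⟨M.a * N.a + M.α ⬝ᵥ N.β,
   M.a • N.α + N.b • M.α - M.β ⨯₃ N.β,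
   N.a • M.β + M.b • N.β + M.α ⨯₃ N.α,
   M.β ⬝ᵥ N.α + M.b * N.b⟩

/-- The determinant of a Zorn vector matrix. -/
def det (M : ZornMatrix F) : F := M.a * M.b - M.α ⬝ᵥ M.β

/-- The identity Zorn vector matrix. -/
def id : ZornMatrix F := ⟨1, 0, 0, 1⟩

end ZornMatrix

/-!
A determinant-one Zorn matrix commuting with all others is a scalar `c • 1` with `c ^ 2 = 1`, and
conversely such scalars are central and nuclear because Zorn multiplication is `F`-bilinear. So
`M*(q)` is the orbit space of the free scalar action of the group of square roots of unity of
`F_q`, which has order `gcd (q - 1) 2` since `F_qˣ` is cyclic of order `q - 1`. The determinant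
`a b - α ⬝ β` is a nondegenerate pairing of `(a, α)` with `(b, β)`, so each nonzero `(a, α)`
has exactly `q ^ 3` partners of determinant one, and `|M(q)| = q ^ 3 (q ^ 4 - 1)`.
-/

lemma AddMonoidHom.card_fiber_mul_card_of_surjective {V W : Type*} [AddGroup V] [AddGroup W]
    {f : V →+ W} (hf : Function.Surjective f) (w : W) :
    Nat.card {v // f v = w} * Nat.card W = Nat.card V := by
  have e : {v // f v = w} ≃ f.ker := f.fiberEquivKerOfSurjective hf w
  rw [Nat.card_congr e, ← Nat.card_congr (Equiv.Set.univ W),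
    ← Set.range_eq_univ.mpr hf, ← AddSubgroup.card_mul_index f.ker, AddSubgroup.index_ker]
  rfl

namespace ZornMatrix

open MulAction

variable {F : Type*} [Field F]

@[ext] lemma ext {M N : ZornMatrix F} (ha : M.a = N.a) (hα : M.α = N.α) (hβ : M.β = N.β)
    (hb : M.b = N.b) : M = N := by
  cases M; cases N; congr

instance : SMul F (ZornMatrix F) := ⟨fun c M => ⟨c * M.a, c • M.α, c • M.β, c * M.b⟩⟩

@[simp] lemma smul_a (c : F) (M : ZornMatrix F) : (c • M).a = c * M.a := rfl
@[simp] lemma smul_α (c : F) (M : ZornMatrix F) : (c • M).α = c • M.α := rfl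
@[simp] lemma smul_β (c : F) (M : ZornMatrix F) : (c • M).β = c • M.β := rfl
@[simp] lemma smul_b (c : F) (M : ZornMatrix F) : (c • M).b = c * M.b := rfl

instance : MulAction F (ZornMatrix F) where
  one_smul M := by ext <;> simp
  mul_smul c d M := by ext <;> simp [mul_assoc]

lemma det_smul (c : F) (M : ZornMatrix F) : (c • M).det = c ^ 2 * M.det := by
  simp only [det, smul_a, smul_b, smul_α, smul_β, smul_dotProduct, dotProduct_smul, smul_eq_mul]
  ring

lemma eq_one_of_smul_eq_self {c : F} {M : ZornMatrix F} (hM : M.det ≠ 0) (h : c • M = M) :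
    c = 1 := by
  by_cases ha : M.a = 0
  · obtain ⟨i, hi⟩ : ∃ i, M.α i ≠ 0 := by
      by_contra! hα
      exact hM (by simp [det, ha, funext hα])
    exact (mul_eq_right₀ hi).mp (congrFun (congrArg ZornMatrix.α h) i)
  · exact (mul_eq_right₀ ha).mp (congrArg ZornMatrix.a h)

lemma smul_mul_assoc (c : F) (M N : ZornMatrix F) : mul (c • M) N = c • mul M N := by
  ext <;> simp [mul] <;> ring

lemma mul_smul_comm (c : F) (M N : ZornMatrix F) : mul M (c • N) = c • mul M N := by
  ext <;> simp [mul] <;> ring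

def scalar (c : F) : ZornMatrix F := ⟨c, 0, 0, c⟩

lemma det_scalar (c : F) : (scalar c).det = c ^ 2 := by
  simp [det, scalar, sq]

lemma scalar_mul (c : F) (M : ZornMatrix F) : mul (scalar c) M = c • M := by
  ext <;> simp [mul, scalar]

lemma mul_scalar (c : F) (M : ZornMatrix F) : mul M (scalar c) = c • M := by
  ext <;> simp [mul, scalar, mul_comm]


lemma eq_scalar_of_forall_mul_comm {z : ZornMatrix F}
    (hz : ∀ x : ZornMatrix F, x.det = 1 → mul z x = mul x z) : z = scalar z.a := by
  have hβ : z.β = 0 := funext fun i => by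
    simpa [mul] using congrArg ZornMatrix.a (hz ⟨1, Pi.single i 1, 0, 1⟩ (by simp [det]))
  have hα : z.α = 0 := funext fun i => by
    simpa [mul] using congrArg ZornMatrix.a (hz ⟨1, 0, Pi.single i 1, 1⟩ (by simp [det]))
  have hab : z.a = z.b := by
    simpa [mul, hα, hβ] using
      congrArg (ZornMatrix.α · 0) (hz ⟨1, Pi.single 0 1, 0, 1⟩ (by simp [det]))
  ext <;> simp [scalar, hα, hβ, hab]

variable (F) in
def center : Set (ZornMatrix F) :=
  {z : ZornMatrix F | z.det = 1 ∧
    (∀ x : ZornMatrix F, x.det = 1 → mul z x = mul x z) ∧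
    (∀ x y : ZornMatrix F, x.det = 1 → y.det = 1 →
      mul z (mul x y) = mul (mul z x) y ∧
      mul x (mul z y) = mul (mul x z) y ∧
      mul (mul x y) z = mul x (mul y z))}

lemma mem_center_iff {z : ZornMatrix F} :
    z ∈ center F ↔ ∃ c : F, c ^ 2 = 1 ∧ z = scalar c := by
  constructor
  · rintro ⟨hdet, hcomm, -⟩
    refine ⟨z.a, ?_, eq_scalar_of_forall_mul_comm hcomm⟩
    rwa [eq_scalar_of_forall_mul_comm hcomm, det_scalar] at hdet
  · rintro ⟨c, hc, rfl⟩
    refine ⟨by rw [det_scalar, hc], fun x _ => by rw [scalar_mul, mul_scalar],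
      fun x y _ _ => ⟨?_, ?_, ?_⟩⟩ <;>
    simp only [scalar_mul, mul_scalar, smul_mul_assoc, mul_smul_comm]


lemma coe_rootsOfUnity_two_sq (ζ : rootsOfUnity 2 F) : ((ζ : Fˣ) : F) ^ 2 = 1 :=
  (mem_rootsOfUnity' 2 (ζ : Fˣ)).mp ζ.2

instance : MulAction (rootsOfUnity 2 F) {M : ZornMatrix F // M.det = 1} where
  smul ζ M :=
    ⟨((ζ : Fˣ) : F) • M.1, by rw [det_smul, coe_rootsOfUnity_two_sq, M.2, one_mul]⟩
  one_smul M := Subtype.ext (one_smul F M.1)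
  mul_smul ζ ξ M := Subtype.ext (smul_smul (M := F) _ _ M.1).symm

@[simp] lemma coe_rootsOfUnity_smul (ζ : rootsOfUnity 2 F)
    (M : {M : ZornMatrix F // M.det = 1}) :
    (ζ • M).1 = ((ζ : Fˣ) : F) • M.1 := rfl

lemma stabilizer_rootsOfUnity_eq_bot (M : {M : ZornMatrix F // M.det = 1}) :
    stabilizer (rootsOfUnity 2 F) M = ⊥ := by
  refine (Subgroup.eq_bot_iff_forall _).mpr fun ζ hζ => Subtype.ext (Units.ext ?_)
  exact eq_one_of_smul_eq_self (by simp [M.2]) (congrArg Subtype.val (mem_stabilizer_iff.mp hζ))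

lemma exists_center_mul_iff_orbitRel (x y : {M : ZornMatrix F // M.det = 1}) :
    (∃ z ∈ center F, x.1 = mul z y.1) ↔ orbitRel (rootsOfUnity 2 F) _ x y := by
  rw [orbitRel_apply, mem_orbit_iff]
  constructor
  · rintro ⟨z, hz, hxz⟩
    obtain ⟨c, hc, rfl⟩ := mem_center_iff.mp hz
    exact ⟨rootsOfUnity.mkOfPowEq c hc, Subtype.ext (by simp [hxz, scalar_mul])⟩
  · rintro ⟨ζ, rfl⟩
    exact ⟨scalar _, mem_center_iff.mpr ⟨_, coe_rootsOfUnity_two_sq ζ, rfl⟩,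
      (scalar_mul _ _).symm⟩

lemma card_rootsOfUnity_two [Finite F] :
    Nat.card (rootsOfUnity 2 F) = (Nat.card F - 1).gcd 2 := by
  rw [rootsOfUnity_eq_ker, IsCyclic.card_powMonoidHom_ker, Nat.card_units]


def pairing (u : F × (Fin 3 → F)) : (F × (Fin 3 → F)) →ₗ[F] F where
  toFun v := u.1 * v.1 - u.2 ⬝ᵥ v.2
  map_add' v w := by simp only [Prod.fst_add, Prod.snd_add, dotProduct_add]; ring
  map_smul' c v := by simp [dotProduct_smul]; ring

lemma pairing_apply (u v : F × (Fin 3 → F)) : pairing u v = u.1 * v.1 - u.2 ⬝ᵥ v.2 := rfl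

lemma pairing_ne_zero {u : F × (Fin 3 → F)} (hu : u ≠ 0) : pairing u ≠ 0 := by
  contrapose! hu
  refine Prod.ext ?_ (funext fun i => ?_)
  · simpa [pairing_apply] using LinearMap.congr_fun hu (1, 0)
  · simpa [pairing_apply] using LinearMap.congr_fun hu (0, Pi.single i 1)

lemma card_pairing_eq_one [Finite F] {u : F × (Fin 3 → F)} (hu : u ≠ 0) :
    Nat.card {v // pairing u v = 1} = Nat.card F ^ 3 := by
  have hsurj := LinearMap.surjective_iff_ne_zero.mpr (pairing_ne_zero hu)
  have hcard :=
    AddMonoidHom.card_fiber_mul_card_of_surjective (f := (pairing u).toAddMonoidHom) hsurj 1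
  rw [Nat.card_prod, Nat.card_fun, Nat.card_fin] at hcard
  exact Nat.eq_of_mul_eq_mul_right Nat.card_pos (hcard.trans (mul_comm _ _))

def equivProd : ZornMatrix F ≃ (F × (Fin 3 → F)) × (F × (Fin 3 → F)) where
  toFun M := ((M.a, M.α), (M.b, M.β))
  invFun p := ⟨p.1.1, p.1.2, p.2.2, p.2.1⟩
  left_inv _ := rfl
  right_inv _ := rfl

lemma card_det_eq_one [Finite F] :
    Nat.card {M : ZornMatrix F // M.det = 1} = Nat.card F ^ 3 * (Nat.card F ^ 4 - 1) := by
  classical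
  have := Fintype.ofFinite F
  have hfiber (u : F × (Fin 3 → F)) :
      Nat.card {v // pairing u v = 1} = if u = 0 then 0 else Nat.card F ^ 3 := by
    split_ifs with hu
    · simp [hu, pairing_apply]
    · exact card_pairing_eq_one hu
  have e : {M : ZornMatrix F // M.det = 1} ≃
      {p : (F × (Fin 3 → F)) × (F × (Fin 3 → F)) // pairing p.1 p.2 = 1} :=
    equivProd.subtypeEquiv fun _ => Iff.rfl
  rw [Nat.card_congr e,
    Nat.card_congr (Equiv.subtypeProdEquivSigmaSubtype fun u v => pairing u v = 1), Nat.card_sigma]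
  simp only [hfiber]
  rw [Finset.sum_ite, Finset.sum_const_zero, zero_add, Finset.sum_const, smul_eq_mul, mul_comm,
    Finset.filter_ne', Finset.card_erase_of_mem (Finset.mem_univ _), Finset.card_univ,
    ← Nat.card_eq_fintype_card, Nat.card_prod, Nat.card_fun, Nat.card_fin, ← pow_succ']

end ZornMatrix

open ZornMatrix in
/-- Paige's simple Moufang loop `M*(q)`, the quotient of the determinant-one Zorn matrix
loop over `F_q` by its center, has order `q^3 (q^4 - 1) / gcd (q - 1) 2`. -/
theorem stmt10 {F : Type*} [Field F] [Fintype F] :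
    letI q : ℕ := Fintype.card F
    letI Z : Set (ZornMatrix F) :=
      {z : ZornMatrix F | z.det = 1 ∧
        (∀ x : ZornMatrix F, x.det = 1 → mul z x = mul x z) ∧
        (∀ x y : ZornMatrix F, x.det = 1 → y.det = 1 →
          mul z (mul x y) = mul (mul z x) y ∧
          mul x (mul z y) = mul (mul x z) y ∧
          mul (mul x y) z = mul x (mul y z))}
    Nat.card (Quot (fun x y : {M : ZornMatrix F // M.det = 1} => ∃ z ∈ Z, x.1 = mul z y.1)) =
      q ^ 3 * (q ^ 4 - 1) / Nat.gcd (q - 1) 2 := by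
  show Nat.card (Quot fun x y : {M : ZornMatrix F // M.det = 1} =>
    ∃ z ∈ center F, x.1 = mul z y.1) = _
  have hcard := Nat.card_congr <|
    MulAction.selfEquivOrbitsQuotientProd (stabilizer_rootsOfUnity_eq_bot (F := F))
  rw [Nat.card_prod, card_det_eq_one, card_rootsOfUnity_two] at hcard
  rw [Nat.card_congr (Quot.congrRight exists_center_mul_iff_orbitRel),
    ← Nat.card_eq_fintype_card]
  exact (Nat.div_eq_of_eq_mul_left (Nat.gcd_pos_of_pos_right _ two_pos) hcard).symm
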